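/- arXiv:1801.10268 — 2 statements merged into one kernel-verified Lean document; each statement's English description precedes it below -/
import Mathlib

section
/- For any ideal i of A with annihilator j in A, the f-orthogonal complement of iV in V equals jV, i.e., (iV)^⊥ = jV where U^⊥ = {v ∈ V : f(v,U) = 0}. -/
/-!
Every element of `A = R + Rπ` is a unit times a power of the nilpotent `π`, and `σ π = -π`, so
`σ x` is associated to `x` for all `x`; in particular every ideal of `A` is `σ`-stable.
Since `2` is a unit and `R → A` is injective, `f v` vanishes on the `A`-submodule `IV` iff `h v`
does, because the trace form `(a, x) ↦ a x + σ (a x)` is nondegenerate on `A`.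
In the symplectic basis `h v (b i) = ± σ (v_{i'})`, where `i'` is the partner of `i`, so `h v`
vanishes on `IV` iff every coordinate of `v` is killed by `I`, i.e. lies in `J`.
-/

open Polynomial

noncomputable section

variable (R : Type) [CommRing R] [IsLocalRing R] [IsPrincipalIdealRing R] [Finite R]
variable (p : R) (ℓ q : ℕ)

/-- The ramified extension `A = R[X]/(X² - p, X^{2ℓ-1})`. -/
abbrev Aext : Type :=
  Polynomial R ⧸ Ideal.span ({X ^ 2 - C p, X ^ (2 * ℓ - 1)} : Set (Polynomial R))

/-- The image `π` of `X` in `A`. -/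
def piA : Aext R p ℓ :=
  Ideal.Quotient.mk (Ideal.span ({X ^ 2 - C p, X ^ (2 * ℓ - 1)} : Set (Polynomial R))) X

theorem exists_unit_mul_pow_of_isNilpotent {S : Type*} [CommRing S] {π : S} (hπ : IsNilpotent π)
    (hdvd : ∀ x : S, ¬IsUnit x → π ∣ x) (x : S) : ∃ (u : Sˣ) (k : ℕ), x = u * π ^ k := by
  obtain ⟨N, hN⟩ := hπ
  have of_not_dvd : ∀ m (y : S), ¬π ^ m ∣ y → ∃ (u : Sˣ) (k : ℕ), y = u * π ^ k := by
    intro m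
    induction m with
    | zero => exact fun y hy => (hy (by simp)).elim
    | succ m ih =>
      intro y hy
      by_cases hu : IsUnit y
      · exact ⟨hu.unit, 0, by simp⟩
      obtain ⟨z, rfl⟩ := hdvd y hu
      obtain ⟨u, k, rfl⟩ := ih z fun hz => hy (by rw [pow_succ']; exact mul_dvd_mul_left π hz)
      exact ⟨u, k + 1, by ring⟩
  by_cases hx : π ^ N ∣ x
  · exact ⟨1, N, by simpa [hN] using hx⟩
  · exact of_not_dvd N x hx

theorem IsLocalRing.exists_unit_mul_pow {S : Type*} [CommRing S] [IsLocalRing S] {p : S}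
    (hmax : maximalIdeal S = Ideal.span {p}) (hp : IsNilpotent p) (x : S) :
    ∃ (u : Sˣ) (k : ℕ), x = u * p ^ k :=
  exists_unit_mul_pow_of_isNilpotent hp (fun y hy =>
    Ideal.mem_span_singleton.1 (hmax ▸ (mem_maximalIdeal y).2 hy)) x

theorem IsLocalRing.pow_pred_dvd_of_mul_eq_zero {S : Type*} [CommRing S] [IsLocalRing S] {p b : S}
    {ℓ : ℕ} (hmax : maximalIdeal S = Ideal.span {p}) (hp : p ^ ℓ = 0) (hp' : p ^ (ℓ - 1) ≠ 0)
    (hb : b * p = 0) : p ^ (ℓ - 1) ∣ b := by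
  obtain ⟨u, s, rfl⟩ := exists_unit_mul_pow hmax ⟨ℓ, hp⟩ b
  have hs : p ^ (s + 1) = 0 := by
    rw [pow_succ, ← u.isUnit.mul_right_eq_zero, ← mul_assoc, hb]
  have hsℓ : ℓ - 1 ≤ s := by
    by_contra! h
    exact hp' (by rw [← Nat.sub_add_cancel (show s + 1 ≤ ℓ - 1 by omega), pow_add, hs, mul_zero])
  exact Dvd.dvd.mul_left (pow_dvd_pow p hsℓ) _

theorem IsLocalRing.isUnit_two_of_odd_card_residueField {S : Type*} [CommRing S] [IsLocalRing S]
    (h : Odd (Nat.card (ResidueField S))) : IsUnit (2 : S) := by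
  by_contra h2
  have h2k : (2 : ResidueField S) = 0 := by
    rw [← map_ofNat (residue S), residue_eq_zero_iff, mem_maximalIdeal]
    exact h2
  have : Fact (Nat.Prime 2) := ⟨Nat.prime_two⟩
  have hord : addOrderOf (1 : ResidueField S) = 2 :=
    addOrderOf_eq_prime (by rw [two_nsmul, ← two_mul, mul_one, h2k]) one_ne_zero
  exact Nat.not_even_iff_odd.2 h (even_iff_two_dvd.2 (hord ▸ addOrderOf_dvd_natCard _))

section Modules

variable {ι A M : Type*} [CommRing A] [AddCommGroup M] [Module A M]

theorem Module.Basis.mem_ideal_smul_top_iff (b : Basis ι A M) (K : Ideal A) (v : M) :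
    v ∈ K • (⊤ : Submodule A M) ↔ ∀ i, b.repr v i ∈ K := by
  refine ⟨fun hv i => ?_, fun hv => ?_⟩
  · have : K • (⊤ : Submodule A M) ≤ Submodule.comap (b.coord i) K :=
      Submodule.smul_le.2 fun r hr n _ => by
        rw [Submodule.mem_comap, LinearMap.map_smul, smul_eq_mul]
        exact K.mul_mem_right _ hr
    exact this hv
  · rw [← b.linearCombination_repr v, Finsupp.linearCombination_apply]
    exact Submodule.finsuppSum_mem _ _ _ _ fun i _ => Submodule.smul_mem_smul (hv i) trivial

theorem Module.Basis.range_le_iff (b : Basis ι A M) (φ : M →ₗ[A] A) (K : Ideal A) :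
    LinearMap.range φ ≤ K ↔ ∀ i, φ (b i) ∈ K := by
  rw [LinearMap.range_eq_map, ← b.span_eq, Submodule.map_span_le, Set.forall_mem_range]

theorem ideal_smul_top_le_ker_iff_range_le {I J : Ideal A}
    (hJ : ∀ a : A, a ∈ J ↔ ∀ x ∈ I, a * x = 0) (φ : M →ₗ[A] A) :
    I • (⊤ : Submodule A M) ≤ LinearMap.ker φ ↔ LinearMap.range φ ≤ J := by
  simp only [Submodule.smul_le, LinearMap.range_le_iff_comap, Submodule.eq_top_iff',
    Submodule.mem_comap, LinearMap.mem_ker, map_smul, smul_eq_mul, hJ, Submodule.mem_top,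
    true_implies, mul_comm (φ _)]
  exact ⟨fun H z c hc => H c hc z, fun H c hc z => H z c hc⟩

theorem le_ker_iff_forall_add_eq_zero (σ : A →+* A)
    (hnondeg : ∀ x : A, (∀ a : A, a * x + σ (a * x) = 0) → x = 0) (N : Submodule A M)
    (φ : M →ₗ[A] A) : N ≤ LinearMap.ker φ ↔ ∀ w ∈ N, φ w + σ (φ w) = 0 := by
  refine ⟨fun H w hw => by simp [LinearMap.mem_ker.1 (H hw)], fun H w hw => hnondeg _ fun a => ?_⟩
  simpa using H _ (N.smul_mem a hw)

end Modules

section Symplectic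

variable {m A V : Type*} [CommRing A] [AddCommGroup V] [Module A V] [DecidableEq m]
  (b : Module.Basis (m ⊕ m) A V) {B : V → V →ₗ[A] A}

theorem apply_basis_inl_eq_coord
    (hb1 : ∀ i j, B (b (.inl i)) (b (.inr j)) = if i = j then 1 else 0)
    (hb2 : ∀ i j, B (b (.inl i)) (b (.inl j)) = 0) (j : m) :
    B (b (.inl j)) = b.coord (.inr j) :=
  b.ext fun i => by cases i <;> simp [hb1, hb2, Finsupp.single_apply, eq_comm]

theorem apply_basis_inr_eq_neg_coord {σ : A →+* A} (hsk : ∀ v w, B w v = -σ (B v w))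
    (hb1 : ∀ i j, B (b (.inl i)) (b (.inr j)) = if i = j then 1 else 0)
    (hb3 : ∀ i j, B (b (.inr i)) (b (.inr j)) = 0) (j : m) :
    B (b (.inr j)) = -b.coord (.inl j) :=
  b.ext fun i => by
    cases i <;> simp [hsk (b (.inl _)) (b (.inr j)), hb1, hb3, Finsupp.single_apply, apply_ite σ]

theorem associated_apply_basis {σ : A →+* A} (hassoc : ∀ x, Associated (σ x) x)
    (hsk : ∀ v w, B w v = -σ (B v w))
    (hb1 : ∀ i j, B (b (.inl i)) (b (.inr j)) = if i = j then 1 else 0)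
    (hb2 : ∀ i j, B (b (.inl i)) (b (.inl j)) = 0)
    (hb3 : ∀ i j, B (b (.inr i)) (b (.inr j)) = 0) (v : V) (i : m ⊕ m) :
    Associated (B v (b i)) (b.repr v i.swap) := by
  rw [hsk]
  cases i with
  | inl j =>
    rw [apply_basis_inl_eq_coord b hb1 hb2, Module.Basis.coord_apply]
    exact (hassoc _).neg_left
  | inr j =>
    rw [apply_basis_inr_eq_neg_coord b hsk hb1 hb3, LinearMap.neg_apply, map_neg, neg_neg,
      Module.Basis.coord_apply]
    exact hassoc _

end Symplectic

/-- `g ↦ ∑_{i < ℓ} p^i g_{2i}` is the constant coordinate of `g` after substituting `X² = p`; it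
kills `X² - p` and, when `p ^ ℓ = 0`, also `X ^ (2ℓ - 1)`, so it retracts `R → A`. -/
def evenCoeffEval {R : Type*} [CommRing R] (p : R) (ℓ : ℕ) : R[X] →ₗ[R] R :=
  ∑ i ∈ Finset.range ℓ, p ^ i • lcoeff R (2 * i)

section EvenCoeffEval

variable {R : Type*} [CommRing R] {p : R} {ℓ : ℕ}

theorem evenCoeffEval_apply (g : R[X]) :
    evenCoeffEval p ℓ g = ∑ i ∈ Finset.range ℓ, p ^ i * g.coeff (2 * i) := by
  simp [evenCoeffEval]

theorem evenCoeffEval_C (hℓ : 1 ≤ ℓ) (r : R) : evenCoeffEval p ℓ (C r) = r := by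
  simp [evenCoeffEval_apply, coeff_C, Nat.one_le_iff_ne_zero.1 hℓ]

theorem evenCoeffEval_mul_X_sq_sub (hp : p ^ ℓ = 0) (a : R[X]) :
    evenCoeffEval p ℓ (a * (X ^ 2 - C p)) = 0 := by
  set F : ℕ → R := fun i => p ^ i * (a * X ^ 2).coeff (2 * i)
  have hF : ∀ i, p ^ i * (a * (X ^ 2 - C p)).coeff (2 * i) = F i - F (i + 1) := fun i => by
    simp only [F, mul_sub, coeff_sub, show 2 * (i + 1) = 2 * i + 2 by ring, coeff_mul_X_pow,
      coeff_mul_C]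
    ring
  rw [evenCoeffEval_apply, Finset.sum_congr rfl fun i _ => hF i, Finset.sum_range_sub']
  simp [F, hp]

theorem evenCoeffEval_mul_X_pow (c : R[X]) : evenCoeffEval p ℓ (c * X ^ (2 * ℓ - 1)) = 0 := by
  rw [evenCoeffEval_apply]
  refine Finset.sum_eq_zero fun i hi => ?_
  rw [coeff_mul_X_pow', if_neg (by simp at hi; omega), mul_zero]

end EvenCoeffEval

namespace Aext

variable {R : Type} [CommRing R] {p : R} {ℓ : ℕ}

theorem piA_sq : piA R p ℓ ^ 2 = algebraMap R (Aext R p ℓ) p := by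
  change Ideal.Quotient.mk _ (X ^ 2) = Ideal.Quotient.mk _ (C p)
  exact Ideal.Quotient.eq.2 (Ideal.subset_span (by simp))

theorem piA_pow_eq_zero : piA R p ℓ ^ (2 * ℓ - 1) = 0 := by
  rw [piA, ← map_pow, Ideal.Quotient.eq_zero_iff_mem]
  exact Ideal.subset_span (by simp)

theorem algebraMap_injective (hℓ : 1 ≤ ℓ) (hp : p ^ ℓ = 0) :
    Function.Injective (algebraMap R (Aext R p ℓ)) := by
  refine (injective_iff_map_eq_zero _).2 fun r hr => ?_
  change Ideal.Quotient.mk _ (C r) = 0 at hr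
  obtain ⟨a, c, hac⟩ := Ideal.mem_span_pair.1 (Ideal.Quotient.eq_zero_iff_mem.1 hr)
  rw [← evenCoeffEval_C (p := p) hℓ r, ← hac, map_add, evenCoeffEval_mul_X_sq_sub hp,
    evenCoeffEval_mul_X_pow, add_zero]

theorem exists_eq_algebraMap_add_algebraMap_mul_piA (x : Aext R p ℓ) :
    ∃ a c : R, x = algebraMap R _ a + algebraMap R _ c * piA R p ℓ := by
  obtain ⟨g, rfl⟩ := Ideal.Quotient.mk_surjective x
  induction g using Polynomial.induction_on with
  | C a => exact ⟨a, 0, by rw [map_zero, zero_mul, add_zero]; rfl⟩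
  | add g g' hg hg' =>
    obtain ⟨a, c, hac⟩ := hg
    obtain ⟨a', c', hac'⟩ := hg'
    exact ⟨a + a', c + c', by rw [map_add, hac, hac', map_add, map_add]; ring⟩
  | monomial n d ih =>
    obtain ⟨a, c, hac⟩ := ih
    refine ⟨c * p, a, ?_⟩
    calc Ideal.Quotient.mk _ (C d * X ^ (n + 1))
        = Ideal.Quotient.mk _ (C d * X ^ n) * piA R p ℓ := by
          rw [pow_succ (X : R[X]) n, ← mul_assoc, map_mul]; rfl
      _ = _ := by
          rw [hac, map_mul]
          linear_combination algebraMap R (Aext R p ℓ) c * piA_sq (p := p) (ℓ := ℓ)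

theorem associated_sigma [IsLocalRing R] (hmax : IsLocalRing.maximalIdeal R = Ideal.span {p})
    (σ : Aext R p ℓ →ₐ[R] Aext R p ℓ) (hσ : σ (piA R p ℓ) = -piA R p ℓ) (x : Aext R p ℓ) :
    Associated (σ x) x := by
  have hπ : IsNilpotent (piA R p ℓ) := ⟨_, piA_pow_eq_zero⟩
  have hdvd : ∀ y : Aext R p ℓ, ¬IsUnit y → piA R p ℓ ∣ y := by
    intro y hy
    obtain ⟨a, c, rfl⟩ := exists_eq_algebraMap_add_algebraMap_mul_piA y
    have ha : a ∈ Ideal.span {p} := hmax ▸ (IsLocalRing.mem_maximalIdeal a).2 fun hunit =>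
      hy (((Commute.all _ _).isNilpotent_mul_left hπ).isUnit_add_left_of_commute (hunit.map _)
        (Commute.all _ _))
    obtain ⟨d, rfl⟩ := Ideal.mem_span_singleton'.1 ha
    exact ⟨algebraMap R _ d * piA R p ℓ + algebraMap R _ c, by rw [map_mul, ← piA_sq]; ring⟩
  obtain ⟨u, k, rfl⟩ := exists_unit_mul_pow_of_isNilpotent hπ hdvd x
  rw [map_mul, map_pow, hσ]
  exact (associated_unit_mul_left _ _ (u.isUnit.map σ)).trans
    ((Associated.refl _).neg_left.pow_pow.trans (associated_unit_mul_left _ _ u.isUnit).symm)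

/-- For `x = r + sπ`, the multipliers `1` and `π` give `2r = 0` and `2sp = 0`; hence
`p ^ (ℓ - 1) ∣ s` and `sπ ∈ π ^ (2ℓ - 1) A = 0`. -/
theorem eq_zero_of_forall_mul_add_sigma_eq_zero [IsLocalRing R] (hℓ : 1 ≤ ℓ)
    (hmax : IsLocalRing.maximalIdeal R = Ideal.span {p}) (hp : p ^ ℓ = 0) (hp' : p ^ (ℓ - 1) ≠ 0)
    (h2 : IsUnit (2 : R)) (σ : Aext R p ℓ →ₐ[R] Aext R p ℓ) (hσ : σ (piA R p ℓ) = -piA R p ℓ)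
    {x : Aext R p ℓ} (hx : ∀ a, a * x + σ (a * x) = 0) : x = 0 := by
  have eq_zero_of_two_mul : ∀ r : R, algebraMap R (Aext R p ℓ) (2 * r) = 0 → r = 0 := fun r hr =>
    h2.mul_right_eq_zero.1 ((map_eq_zero_iff _ (algebraMap_injective hℓ hp)).1 hr)
  obtain ⟨r, s, rfl⟩ := exists_eq_algebraMap_add_algebraMap_mul_piA x
  obtain rfl : r = 0 := eq_zero_of_two_mul r (by
    have h1 := hx 1
    rw [one_mul, map_add, map_mul, hσ, AlgHom.commutes, AlgHom.commutes] at h1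
    rw [map_mul, map_ofNat]
    linear_combination h1)
  have hsp : s * p = 0 := eq_zero_of_two_mul _ (by
    have hπx : piA R p ℓ * (algebraMap R _ 0 + algebraMap R _ s * piA R p ℓ) =
        algebraMap R _ (s * p) := by
      rw [map_mul, ← piA_sq, map_zero]; ring
    have hπ := hx (piA R p ℓ)
    rw [hπx, AlgHom.commutes] at hπ
    rw [map_mul, map_ofNat]
    linear_combination hπ)
  obtain ⟨d, rfl⟩ := IsLocalRing.pow_pred_dvd_of_mul_eq_zero hmax hp hp' hsp
  rw [map_zero, zero_add, map_mul, map_pow, ← piA_sq, ← pow_mul]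
  calc _ = algebraMap R _ d * piA R p ℓ ^ (2 * (ℓ - 1) + 1) := by ring
    _ = 0 := by rw [show 2 * (ℓ - 1) + 1 = 2 * ℓ - 1 by omega, piA_pow_eq_zero, mul_zero]

end Aext

theorem stmt9
    (hℓ : 1 ≤ ℓ)
    (hmax : IsLocalRing.maximalIdeal R = Ideal.span {p})
    (hnil : Ideal.span {p} ^ ℓ = (⊥ : Ideal R))
    (hnil' : Ideal.span {p} ^ (ℓ - 1) ≠ (⊥ : Ideal R))
    (hq : Nat.card (IsLocalRing.ResidueField R) = q)
    (hodd : Odd q)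
    (σ : Aext R p ℓ →ₐ[R] Aext R p ℓ)
    (hσ : σ (piA R p ℓ) = - piA R p ℓ)
    (V : Type) [AddCommGroup V] [Module (Aext R p ℓ) V]
    (n : ℕ)
    (b : Module.Basis (Fin n ⊕ Fin n) (Aext R p ℓ) V)
    (h : V → V → Aext R p ℓ)
    (hadd : ∀ v v' w : V, h (v + v') w = h v w + h v' w)
    (hs2 : ∀ (a : Aext R p ℓ) (v w : V), h v (a • w) = a * h v w)
    (hsk : ∀ v w : V, h w v = - σ (h v w))
    (hb1 : ∀ i j, h (b (Sum.inl i)) (b (Sum.inr j)) = if i = j then 1 else 0)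
    (hb2 : ∀ i j, h (b (Sum.inl i)) (b (Sum.inl j)) = 0)
    (hb3 : ∀ i j, h (b (Sum.inr i)) (b (Sum.inr j)) = 0)
    (f : V → V → R)
    (hf : ∀ v w : V, algebraMap R (Aext R p ℓ) (2 * f v w) = h v w + σ (h v w))
    (I J : Ideal (Aext R p ℓ))
    (hJ : ∀ a : Aext R p ℓ, a ∈ J ↔ ∀ x ∈ I, a * x = 0) :
    ∀ v : V,
      (∀ w ∈ (I • (⊤ : Submodule (Aext R p ℓ) V) : Submodule (Aext R p ℓ) V), f v w = 0) ↔
      v ∈ (J • (⊤ : Submodule (Aext R p ℓ) V) : Submodule (Aext R p ℓ) V) := by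
  have hp : p ^ ℓ = 0 := by rwa [Ideal.span_singleton_pow, Ideal.span_singleton_eq_bot] at hnil
  have hp' : p ^ (ℓ - 1) ≠ 0 := by
    rwa [Ne, Ideal.span_singleton_pow, Ideal.span_singleton_eq_bot] at hnil'
  have h2 : IsUnit (2 : R) := IsLocalRing.isUnit_two_of_odd_card_residueField (hq ▸ hodd)
  let B : V → V →ₗ[Aext R p ℓ] Aext R p ℓ := fun v =>
    { toFun := h v
      map_add' := fun w w' => by rw [hsk w v, hsk w' v, hsk (w + w') v, hadd, map_add, neg_add]
      map_smul' := fun a w => hs2 a v w }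
  intro v
  have hf0 : ∀ w, f v w = 0 ↔ h v w + σ (h v w) = 0 := fun w => by
    rw [← hf, map_eq_zero_iff _ (Aext.algebraMap_injective hℓ hp), h2.mul_right_eq_zero]
  calc (∀ w ∈ I • (⊤ : Submodule (Aext R p ℓ) V), f v w = 0)
      ↔ I • (⊤ : Submodule (Aext R p ℓ) V) ≤ LinearMap.ker (B v) := by
        simp_rw [hf0]
        exact (le_ker_iff_forall_add_eq_zero (σ : Aext R p ℓ →+* Aext R p ℓ)
          (fun _ => Aext.eq_zero_of_forall_mul_add_sigma_eq_zero hℓ hmax hp hp' h2 σ hσ) _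
          (B v)).symm
    _ ↔ LinearMap.range (B v) ≤ J := ideal_smul_top_le_ker_iff_range_le hJ _
    _ ↔ ∀ i, B v (b i) ∈ J := b.range_le_iff _ _
    _ ↔ ∀ i, b.repr v i.swap ∈ J := forall_congr' fun i => Ideal.mem_iff_of_associated
        (associated_apply_basis b (Aext.associated_sigma hmax σ hσ) hsk hb1 hb2 hb3 v i)
    _ ↔ ∀ i, b.repr v i ∈ J :=
      (Sum.swap_leftInverse.surjective.forall (p := fun i => b.repr v i ∈ J)).symm
    _ ↔ v ∈ J • ⊤ := (b.mem_ideal_smul_top_iff J v).symm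
end
end

section
/- The number of U(V,h)-orbits on V∖rV equals the number of U(V,h)-orbits on rV∖r^2V. -/
open Polynomial

noncomputable section


section AuxLemmas

lemma Rlem' {R : Type} [CommRing R] [IsLocalRing R] (p : R) (ℓ : ℕ)
    (hmax : IsLocalRing.maximalIdeal R = Ideal.span {p})
    (hnil : Ideal.span {p} ^ ℓ = (⊥ : Ideal R))
    (hnil' : Ideal.span {p} ^ (ℓ - 1) ≠ (⊥ : Ideal R)) :
    ∀ b : R, p * b = 0 → b ∈ Ideal.span {p ^ (ℓ - 1)} := by
  intro b hb
  have hpl : p ^ ℓ = 0 := by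
    rw [Ideal.span_singleton_pow] at hnil
    exact Ideal.span_singleton_eq_bot.mp hnil
  by_cases hb0 : b = 0
  · simp [hb0]
  have hne : ∃ k, b ∉ Ideal.span {p ^ k} := by
    refine ⟨ℓ, fun hc => hb0 ?_⟩
    obtain ⟨c, rfl⟩ := Ideal.mem_span_singleton.mp hc
    rw [hpl, zero_mul]
  classical
  set m := Nat.find hne with hmdef
  have hm : b ∉ Ideal.span {p ^ m} := Nat.find_spec hne
  have hm0 : m ≠ 0 := by
    intro h
    exact hm (by rw [h, pow_zero]; exact Ideal.mem_span_singleton.mpr (one_dvd b))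
  have hmem : b ∈ Ideal.span {p ^ (m - 1)} := by
    by_contra hc
    exact (Nat.find_min hne (Nat.sub_lt (Nat.pos_of_ne_zero hm0) one_pos)) hc
  obtain ⟨c, hc⟩ := Ideal.mem_span_singleton.mp hmem
  have hstep : p ^ (m - 1) * p = p ^ m := by
    rw [← pow_succ]; congr 1; omega
  have hcu : IsUnit c := by
    by_contra hcu
    apply hm
    have : c ∈ IsLocalRing.maximalIdeal R := hcu
    rw [hmax, Ideal.mem_span_singleton] at this
    obtain ⟨d, rfl⟩ := this
    rw [Ideal.mem_span_singleton, hc]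
    exact ⟨d, by rw [← hstep]; ring⟩
  have hpm : p ^ m = 0 := by
    obtain ⟨u, rfl⟩ := hcu
    have h1 : p ^ m * (u : R) = 0 := by
      have : p * b = p ^ m * u := by
        rw [hc, ← mul_assoc, mul_comm p (p ^ (m - 1)), hstep]
      rw [← this, hb]
    calc p ^ m = p ^ m * (u : R) * (↑u⁻¹ : R) := by
          rw [mul_assoc, Units.mul_inv, mul_one]
      _ = 0 := by rw [h1, zero_mul]
  have hlm : ℓ - 1 < m := by
    by_contra hcon
    push_neg at hcon
    apply hnil'
    rw [eq_bot_iff]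
    calc Ideal.span {p} ^ (ℓ - 1) ≤ Ideal.span {p} ^ m := Ideal.pow_le_pow_right hcon
      _ = ⊥ := by
          rw [Ideal.span_singleton_pow, Ideal.span_singleton_eq_bot.mpr hpm]
  rw [Ideal.mem_span_singleton, hc]
  exact Dvd.dvd.mul_right (pow_dvd_pow p (by omega)) c

lemma annAR' {R : Type} [CommRing R] [IsLocalRing R] (p : R) (ℓ : ℕ) (hℓ1 : 1 < ℓ)
    (hmax : IsLocalRing.maximalIdeal R = Ideal.span {p})
    (hnil : Ideal.span {p} ^ ℓ = (⊥ : Ideal R))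
    (hnil' : Ideal.span {p} ^ (ℓ - 1) ≠ (⊥ : Ideal R)) :
    ∀ w : AdjoinRoot (X ^ 2 - C p) ⧸
      (Ideal.span {AdjoinRoot.root (X ^ 2 - C p) ^ (2 * ℓ - 1)}),
      Ideal.Quotient.mk _ (AdjoinRoot.root (X ^ 2 - C p)) * w = 0 →
      w ∈ Ideal.span {(Ideal.Quotient.mk
        (Ideal.span {AdjoinRoot.root (X ^ 2 - C p) ^ (2 * ℓ - 1)})
        (AdjoinRoot.root (X ^ 2 - C p))) ^ (2 * ℓ - 2)} := by
  set f₁ : Polynomial R := X ^ 2 - C p with hf₁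
  have hmonic : f₁.Monic := monic_X_pow_sub_C p (by norm_num)
  set ρ := AdjoinRoot.root f₁ with hρ
  set J : Ideal (AdjoinRoot f₁) := Ideal.span {ρ ^ (2 * ℓ - 1)} with hJ
  have hroot2 : ρ ^ 2 = algebraMap R _ p := by
    have h0 := AdjoinRoot.eval₂_root f₁
    rw [hf₁] at h0
    simp only [eval₂_sub, eval₂_pow, eval₂_X, eval₂_C] at h0
    rw [AdjoinRoot.algebraMap_eq]
    linear_combination (h0 : _)
  have hρpow : ρ ^ (2 * ℓ - 1) = algebraMap R _ (p ^ (ℓ - 1)) * ρ := by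
    have : 2 * ℓ - 1 = 2 * (ℓ - 1) + 1 := by omega
    rw [this, pow_succ, pow_mul, hroot2, ← map_pow]
  have hρpow2 : ρ ^ (2 * ℓ - 2) = algebraMap R _ (p ^ (ℓ - 1)) := by
    have : 2 * ℓ - 2 = 2 * (ℓ - 1) := by omega
    rw [this, pow_mul, hroot2, ← map_pow]
  intro w hw
  obtain ⟨z, rfl⟩ := Ideal.Quotient.mk_surjective w
  rw [← map_mul, Ideal.Quotient.eq_zero_iff_mem, hJ, Ideal.mem_span_singleton] at hw
  obtain ⟨u, hu⟩ := hw
  obtain ⟨g, hg⟩ : ∃ g, AdjoinRoot.mk f₁ g = z - algebraMap R _ (p ^ (ℓ - 1)) * u :=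
    AdjoinRoot.mk_surjective _
  have hann : ρ * AdjoinRoot.mk f₁ g = 0 := by
    rw [hg]
    have : ρ * z = algebraMap R _ (p ^ (ℓ - 1)) * ρ * u := by rw [hu, hρpow]
    linear_combination this
  rw [hρ, ← AdjoinRoot.mk_X, ← map_mul, AdjoinRoot.mk_eq_zero] at hann
  set r := g %ₘ f₁ with hr
  have hgr : AdjoinRoot.mk f₁ g = AdjoinRoot.mk f₁ r := by
    rw [AdjoinRoot.mk_eq_mk]
    exact ⟨g /ₘ f₁, by rw [hr]; linear_combination -modByMonic_add_div g f₁⟩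
  have hdvdr : f₁ ∣ X * r := by
    have h2 : f₁ ∣ X * (g - r) := by
      refine Dvd.dvd.mul_left ?_ X
      exact ⟨g /ₘ f₁, by rw [hr]; linear_combination -modByMonic_add_div g f₁⟩
    have := dvd_sub hann h2
    simpa [mul_sub] using this
  have hdegf : f₁.degree = 2 := by
    rw [hf₁]; exact degree_X_pow_sub_C (by norm_num) p
  have hdegr : r.degree ≤ 1 := by
    have h2 := degree_modByMonic_lt g hmonic
    rw [hdegf] at h2
    rw [hr]
    exact Order.le_of_lt_succ (by exact_mod_cast h2)
  have hrr : r = C (r.coeff 1) * X + C (r.coeff 0) := eq_X_add_C_of_degree_le_one hdegr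
  set r1 := r.coeff 1 with hr1
  set r0 := r.coeff 0 with hr0
  have hs : f₁ ∣ C r0 * X + C (r1 * p) := by
    have : C r0 * X + C (r1 * p) = X * r - C r1 * f₁ := by
      rw [hrr, hf₁, C_mul]; ring
    rw [this]
    exact dvd_sub hdvdr (Dvd.dvd.mul_left dvd_rfl (C r1))
  have hs0 : C r0 * X + C (r1 * p) = 0 := by
    by_contra hne
    exact (hmonic.not_dvd_of_degree_lt hne
      (by rw [hdegf]; exact lt_of_le_of_lt degree_linear_le (by norm_num))) hs
  have hr0z : r0 = 0 := by
    have := congrArg (fun q => coeff q 1) hs0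
    simpa using this
  have hr1p : p * r1 = 0 := by
    have h3 := congrArg (fun q => coeff q 0) hs0
    simp only [coeff_add, coeff_C_mul, coeff_X_zero, mul_zero, zero_add, coeff_C,
      if_pos rfl, coeff_zero] at h3
    rw [mul_comm]
    simpa using h3
  have hr1mem : r1 ∈ Ideal.span {p ^ (ℓ - 1)} := Rlem' p ℓ hmax hnil hnil' r1 hr1p
  obtain ⟨c, hc⟩ := Ideal.mem_span_singleton.mp hr1mem
  have hy2 : AdjoinRoot.mk f₁ g = algebraMap R _ (p ^ (ℓ - 1)) * (algebraMap R _ c * ρ) := by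
    rw [hgr, hrr, hr0z, hc]
    rw [map_add, map_mul, AdjoinRoot.mk_X, AdjoinRoot.mk_C, AdjoinRoot.mk_C]
    rw [AdjoinRoot.algebraMap_eq, map_mul, map_zero]
    ring
  have hz : z = algebraMap R _ (p ^ (ℓ - 1)) * (algebraMap R _ c * ρ + u) := by
    linear_combination hy2 - hg
  rw [Ideal.mem_span_singleton]
  refine ⟨Ideal.Quotient.mk J (algebraMap R _ c * ρ + u), ?_⟩
  rw [← map_pow, hρpow2, ← map_mul, ← hz]

lemma auxEquiv' {R : Type} [CommRing R] (p : R) (ℓ : ℕ) :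
    ∃ e : (Polynomial R ⧸ Ideal.span ({X ^ 2 - C p, X ^ (2 * ℓ - 1)} : Set (Polynomial R))) ≃+*
      (AdjoinRoot (X ^ 2 - C p) ⧸ (Ideal.span {AdjoinRoot.root (X ^ 2 - C p) ^ (2 * ℓ - 1)})),
      e (Ideal.Quotient.mk _ X) = Ideal.Quotient.mk _ (AdjoinRoot.root (X ^ 2 - C p)) := by
  have h1 : Ideal.span ({X ^ 2 - C p, X ^ (2 * ℓ - 1)} : Set (Polynomial R))
      = Ideal.span {X ^ 2 - C p} ⊔ Ideal.span ({X ^ (2 * ℓ - 1)} : Set (Polynomial R)) := by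
    rw [Ideal.span_insert]
  have h2 : (Ideal.span ({X ^ (2 * ℓ - 1)} : Set (Polynomial R))).map
      (Ideal.Quotient.mk (Ideal.span {X ^ 2 - C p}))
      = Ideal.span {AdjoinRoot.root (X ^ 2 - C p) ^ (2 * ℓ - 1)} := by
    rw [Ideal.map_span, Set.image_singleton, map_pow]
    rfl
  refine ⟨((Ideal.quotEquivOfEq h1).trans
    ((DoubleQuot.quotQuotEquivQuotSup _ _).symm)).trans (@Ideal.quotEquivOfEq _ _ _ _ inferInstance (by exact (inferInstance : (Ideal.span {AdjoinRoot.root (X ^ 2 - C p) ^ (2 * ℓ - 1)} : Ideal (AdjoinRoot (X ^ 2 - C p))).IsTwoSided)) h2), ?_⟩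
  rfl

end AuxLemmas

variable (R : Type) [CommRing R] [IsLocalRing R] [IsPrincipalIdealRing R] [Finite R]
variable (p : R) (ℓ q : ℕ)

lemma L1A (hℓ1 : 1 < ℓ)
    (hmax : IsLocalRing.maximalIdeal R = Ideal.span {p})
    (hnil : Ideal.span {p} ^ ℓ = (⊥ : Ideal R))
    (hnil' : Ideal.span {p} ^ (ℓ - 1) ≠ (⊥ : Ideal R)) :
    ∀ a : Aext R p ℓ, piA R p ℓ * a = 0 → a ∈ Ideal.span {piA R p ℓ ^ (2 * ℓ - 2)} := by
  obtain ⟨e, he⟩ := auxEquiv' p ℓ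
  intro a ha
  have h1 : Ideal.Quotient.mk _ (AdjoinRoot.root (X ^ 2 - C p)) * e a = 0 := by
    rw [← he, ← map_mul]
    show e (piA R p ℓ * a) = 0
    rw [ha, map_zero]
  have h2 := annAR' p ℓ hℓ1 hmax hnil hnil' (e a) h1
  rw [Ideal.mem_span_singleton] at h2 ⊢
  obtain ⟨c, hc⟩ := h2
  refine ⟨e.symm c, ?_⟩
  have he' : e (piA R p ℓ) = Ideal.Quotient.mk _ (AdjoinRoot.root (X ^ 2 - C p)) := he
  apply e.injective
  rw [map_mul, map_pow, RingEquiv.apply_symm_apply, he']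
  exact hc

omit [IsLocalRing R] in
lemma finA : Finite (Aext R p ℓ) := by
  obtain ⟨e, -⟩ := auxEquiv' p ℓ
  have hmonic : (X ^ 2 - C p).Monic := monic_X_pow_sub_C p (by norm_num)
  haveI h1 : Module.Finite R (AdjoinRoot (X ^ 2 - C p)) :=
    Module.Finite.of_basis (AdjoinRoot.powerBasis' hmonic).basis
  haveI h2 : Module.Finite R (AdjoinRoot (X ^ 2 - C p) ⧸
      (Ideal.span {AdjoinRoot.root (X ^ 2 - C p) ^ (2 * ℓ - 1)})) :=
    Module.Finite.of_surjective (Ideal.Quotient.mkₐ R _).toLinearMap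
      (Ideal.Quotient.mkₐ_surjective R _)
  haveI h3 : Finite (AdjoinRoot (X ^ 2 - C p) ⧸
      (Ideal.span {AdjoinRoot.root (X ^ 2 - C p) ^ (2 * ℓ - 1)})) :=
    Module.finite_of_finite R
  exact Finite.of_equiv _ e.symm.toEquiv

lemma one_notmem_piA (hℓ : 1 ≤ ℓ) (hmax : IsLocalRing.maximalIdeal R = Ideal.span {p}) :
    (1 : Aext R p ℓ) ∉ Ideal.span {piA R p ℓ} := by
  intro hmem
  rw [Ideal.mem_span_singleton] at hmem
  obtain ⟨c, hc⟩ := hmem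
  set φ0 : Polynomial R →+* R ⧸ Ideal.span {p} :=
    eval₂RingHom (Ideal.Quotient.mk (Ideal.span {p})) 0 with hφ0
  have hker : Ideal.span ({X ^ 2 - C p, X ^ (2 * ℓ - 1)} : Set (Polynomial R)) ≤
      RingHom.ker φ0 := by
    rw [Ideal.span_le]
    rintro f hf
    rcases hf with rfl | hf
    · show φ0 _ = 0
      rw [hφ0]
      simp only [coe_eval₂RingHom, eval₂_sub, eval₂_pow, eval₂_X, eval₂_C]
      rw [Ideal.Quotient.eq_zero_iff_mem.mpr (Ideal.mem_span_singleton.mpr dvd_rfl)]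
      norm_num
    · rcases hf with rfl
      show φ0 _ = 0
      rw [hφ0]
      simp only [coe_eval₂RingHom, eval₂_pow, eval₂_X]
      exact zero_pow (by omega)
  set Φ := Ideal.Quotient.lift _ φ0 (fun a ha => RingHom.mem_ker.mp (hker ha)) with hΦ
  have h1 : Φ (piA R p ℓ) = 0 := by
    rw [hΦ, piA, Ideal.Quotient.lift_mk, hφ0]
    simp
  have h2 := congrArg Φ hc
  rw [map_one, map_mul, h1, zero_mul] at h2
  haveI : Nontrivial (R ⧸ Ideal.span {p}) := Ideal.Quotient.nontrivial_iff.mpr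
    (by rw [← hmax]; exact (IsLocalRing.maximalIdeal.isMaximal R).ne_top)
  exact one_ne_zero h2

lemma two_unit_A (hq : Nat.card (IsLocalRing.ResidueField R) = q)
    (hodd : Odd q) : IsUnit (2 : Aext R p ℓ) := by
  have h2R : IsUnit (2 : R) := by
    by_contra hnu
    have hmem : (2 : R) ∈ IsLocalRing.maximalIdeal R := hnu
    have hres : (2 : IsLocalRing.ResidueField R) = 0 := by
      have h0 : IsLocalRing.residue R 2 = 0 := Ideal.Quotient.eq_zero_iff_mem.mpr hmem
      rw [show (2 : IsLocalRing.ResidueField R) = IsLocalRing.residue R 2 from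
        (map_ofNat (IsLocalRing.residue R) 2).symm]
      exact h0
    have hsm : (2 : ℕ) • (1 : IsLocalRing.ResidueField R) = 0 := by
      rw [nsmul_eq_mul]
      simpa using hres
    have hord : addOrderOf (1 : IsLocalRing.ResidueField R) ∣ 2 :=
      addOrderOf_dvd_of_nsmul_eq_zero hsm
    have hord1 : addOrderOf (1 : IsLocalRing.ResidueField R) ≠ 1 :=
      fun hcon => one_ne_zero (AddMonoid.addOrderOf_eq_one_iff.mp hcon)
    have hord2 : addOrderOf (1 : IsLocalRing.ResidueField R) = 2 := by
      rcases (Nat.dvd_prime Nat.prime_two).mp hord with h | h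
      · exact absurd h hord1
      · exact h
    have hdvd : 2 ∣ Nat.card (IsLocalRing.ResidueField R) := by
      rw [← hord2]
      exact addOrderOf_dvd_natCard _
    rw [hq] at hdvd
    exact (Nat.not_even_iff_odd.mpr hodd) (even_iff_two_dvd.mpr hdvd)
  have h2A : (2 : Aext R p ℓ) = algebraMap R (Aext R p ℓ) (2 : R) := by
    rw [map_ofNat]
  rw [h2A]
  exact h2R.map _

set_option maxHeartbeats 2000000 in
theorem stmt13
    (hℓ : 1 ≤ ℓ)
    (hmax : IsLocalRing.maximalIdeal R = Ideal.span {p})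
    (hnil : Ideal.span {p} ^ ℓ = (⊥ : Ideal R))
    (hnil' : Ideal.span {p} ^ (ℓ - 1) ≠ (⊥ : Ideal R))
    (hq : Nat.card (IsLocalRing.ResidueField R) = q)
    (hodd : Odd q)
    (σ : Aext R p ℓ →ₐ[R] Aext R p ℓ)
    (hσ : σ (piA R p ℓ) = - piA R p ℓ)
    (V : Type) [AddCommGroup V] [Module (Aext R p ℓ) V] [Module R V]
    [IsScalarTower R (Aext R p ℓ) V]
    (n : ℕ) (hn : 1 ≤ n)
    (b : Module.Basis (Fin n ⊕ Fin n) (Aext R p ℓ) V)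
    (h : V → V → Aext R p ℓ)
    (hadd : ∀ v v' w : V, h (v + v') w = h v w + h v' w)
    (hs1 : ∀ (a : Aext R p ℓ) (v w : V), h (a • v) w = σ a * h v w)
    (hs2 : ∀ (a : Aext R p ℓ) (v w : V), h v (a • w) = a * h v w)
    (hsk : ∀ v w : V, h w v = - σ (h v w))
    (hb1 : ∀ i j, h (b (Sum.inl i)) (b (Sum.inr j)) = if i = j then 1 else 0)
    (hb2 : ∀ i j, h (b (Sum.inl i)) (b (Sum.inl j)) = 0)
    (hb3 : ∀ i j, h (b (Sum.inr i)) (b (Sum.inr j)) = 0)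
    (hℓ1 : 1 < ℓ)
    (hclass : ∀ u v : V,
      u ∉ (Ideal.span {piA R p ℓ} • (⊤ : Submodule (Aext R p ℓ) V) :
        Submodule (Aext R p ℓ) V) →
      v ∉ (Ideal.span {piA R p ℓ} • (⊤ : Submodule (Aext R p ℓ) V) :
        Submodule (Aext R p ℓ) V) →
      ((∃ g : V ≃ₗ[Aext R p ℓ] V, (∀ x y : V, h (g x) (g y) = h x y) ∧ g u = v) ↔
        h u u = h v v))
    (hminS : ∀ a : Aext R p ℓ,
      σ a = -a → a ∈ Ideal.span {piA R p ℓ ^ (2 * ℓ - 2)} → a = 0) :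
    ∃ T₁ T₂ : Finset V,
      (∀ u ∈ T₁, u ∉ (Ideal.span {piA R p ℓ} • (⊤ : Submodule (Aext R p ℓ) V) :
        Submodule (Aext R p ℓ) V)) ∧
      (∀ v : V,
        v ∉ (Ideal.span {piA R p ℓ} • (⊤ : Submodule (Aext R p ℓ) V) :
          Submodule (Aext R p ℓ) V) →
        ∃! u : V, u ∈ T₁ ∧
          ∃ g : V ≃ₗ[Aext R p ℓ] V, (∀ x y : V, h (g x) (g y) = h x y) ∧ g u = v) ∧
      (∀ u ∈ T₂,
        u ∈ (Ideal.span {piA R p ℓ} • (⊤ : Submodule (Aext R p ℓ) V) :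
          Submodule (Aext R p ℓ) V) ∧
        u ∉ (Ideal.span {piA R p ℓ} ^ 2 • (⊤ : Submodule (Aext R p ℓ) V) :
          Submodule (Aext R p ℓ) V)) ∧
      (∀ v : V,
        v ∈ (Ideal.span {piA R p ℓ} • (⊤ : Submodule (Aext R p ℓ) V) :
          Submodule (Aext R p ℓ) V) →
        v ∉ (Ideal.span {piA R p ℓ} ^ 2 • (⊤ : Submodule (Aext R p ℓ) V) :
          Submodule (Aext R p ℓ) V) →
        ∃! u : V, u ∈ T₂ ∧
          ∃ g : V ≃ₗ[Aext R p ℓ] V, (∀ x y : V, h (g x) (g y) = h x y) ∧ g u = v) ∧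
      T₁.card = T₂.card := by
  classical
  have hL1 := L1A R p ℓ hℓ1 hmax hnil hnil'
  have hone := one_notmem_piA R p ℓ hℓ hmax
  have h2u := two_unit_A R p ℓ q hq hodd
  haveI : Finite (Aext R p ℓ) := finA R p ℓ
  obtain ⟨u2, hu2⟩ := h2u
  set β : Aext R p ℓ := ((u2⁻¹ : (Aext R p ℓ)ˣ) : Aext R p ℓ) with hβdef
  have hβ : (2 : Aext R p ℓ) * β = 1 := by rw [← hu2, hβdef]; exact u2.mul_inv
  have hσ2 : σ (2 : Aext R p ℓ) = 2 := map_ofNat σ 2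
  have hσβ : σ β = β := by
    have h1 : (2 : Aext R p ℓ) * σ β = 1 := by rw [← hσ2, ← map_mul, hβ, map_one]
    calc σ β = (2 * β) * σ β := by rw [hβ, one_mul]
      _ = β * (2 * σ β) := by ring
      _ = β := by rw [h1, mul_one]
  have hF6 : ∀ a : Aext R p ℓ, σ a = -a → piA R p ℓ * a = 0 → a = 0 :=
    fun a h1 h2 => hminS a h1 (hL1 a h2)
  have hmemr : ∀ (c : Aext R p ℓ) (x : V),
      x ∈ (Ideal.span {c} • (⊤ : Submodule (Aext R p ℓ) V) : Submodule (Aext R p ℓ) V) ↔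
        ∃ y : V, x = c • y := by
    intro c x
    rw [Submodule.ideal_span_singleton_smul]
    constructor
    · intro hx
      rw [← SetLike.mem_coe, Submodule.coe_pointwise_smul] at hx
      obtain ⟨y, -, hy⟩ := Set.mem_smul_set.mp hx
      exact ⟨y, hy.symm⟩
    · rintro ⟨y, rfl⟩
      exact Submodule.smul_mem_pointwise_smul y c ⊤ trivial
  set i0 : Fin n := ⟨0, hn⟩ with hi0
  set ev : V := b (Sum.inl i0) with hev
  set fv : V := b (Sum.inr i0) with hfv
  set w : Aext R p ℓ → V := fun s => (-(β * s)) • ev + fv with hwdef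
  have hadd2 : ∀ v x y : V, h v (x + y) = h v x + h v y := by
    intro v x y
    rw [hsk (x + y) v, hadd, map_add, neg_add, ← hsk x v, ← hsk y v]
  have hzero2 : ∀ v : V, h v 0 = 0 := by
    intro v
    have h1 := hs2 0 v 0
    simpa using h1
  have hef : h ev fv = 1 := by
    have h1 := hb1 i0 i0
    simpa [hev, hfv] using h1
  have hee : h ev ev = 0 := hb2 i0 i0
  have hff : h fv fv = 0 := hb3 i0 i0
  have hfe : h fv ev = -1 := by rw [hsk ev fv, hef, map_one]
  have hval : ∀ s : Aext R p ℓ, σ s = -s → h (w s) (w s) = s := by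
    intro s hs
    have hσa : σ (-(β * s)) = β * s := by rw [map_neg, map_mul, hσβ, hs]; ring
    have hws : w s = (-(β * s)) • ev + fv := by simp only [hwdef]
    have hw1 : h ev (w s) = 1 := by
      rw [hws, hadd2, hs2, hee, hef]; ring
    have hw2 : h fv (w s) = β * s := by
      rw [hws, hadd2, hs2, hfe, hff]; ring
    calc h (w s) (w s) = h ((-(β * s)) • ev) (w s) + h fv (w s) := by
          conv_lhs => rw [hws]
          rw [hadd]
      _ = σ (-(β * s)) * h ev (w s) + h fv (w s) := by rw [hs1]
      _ = (β * s) * 1 + β * s := by rw [hσa, hw1, hw2]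
      _ = s := by linear_combination s * hβ
  have hcoordw : ∀ s : Aext R p ℓ, b.repr (w s) (Sum.inr i0) = 1 ∧
      b.repr (w s) (Sum.inl i0) = -(β * s) := by
    intro s
    have hws : w s = (-(β * s)) • ev + fv := by simp only [hwdef]
    rw [hws, hev, hfv]
    constructor
    · rw [map_add, map_smul, Module.Basis.repr_self, Module.Basis.repr_self]
      simp [Finsupp.single_apply]
    · rw [map_add, map_smul, Module.Basis.repr_self, Module.Basis.repr_self]
      simp [Finsupp.single_apply]
  have hwnot : ∀ s : Aext R p ℓ,
      w s ∉ (Ideal.span {piA R p ℓ} • (⊤ : Submodule (Aext R p ℓ) V) :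
        Submodule (Aext R p ℓ) V) := by
    intro s hc
    obtain ⟨y, hy⟩ := (hmemr _ _).mp hc
    have h1 := congrArg (fun x => b.repr x (Sum.inr i0)) hy
    simp only [map_smul, Finsupp.smul_apply, smul_eq_mul] at h1
    rw [(hcoordw s).1] at h1
    apply hone
    rw [Ideal.mem_span_singleton]
    exact ⟨_, h1⟩
  have hwinj : Function.Injective w := by
    intro s s' hss
    have h1 := congrArg (fun x => b.repr x (Sum.inl i0)) hss
    rw [(hcoordw s).2, (hcoordw s').2] at h1
    have h2 : β * s = β * s' := neg_inj.mp h1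
    calc s = (2 * β) * s := by rw [hβ, one_mul]
      _ = 2 * (β * s) := by ring
      _ = 2 * (β * s') := by rw [h2]
      _ = (2 * β) * s' := by ring
      _ = s' := by rw [hβ, one_mul]
  have hskew : ∀ v : V, σ (h v v) = -(h v v) := by
    intro v
    linear_combination hsk v v
  have hkey : ∀ s s' : Aext R p ℓ, σ s = -s → σ s' = -s' →
      ∀ g : V ≃ₗ[Aext R p ℓ] V, (∀ x y : V, h (g x) (g y) = h x y) →
      g (piA R p ℓ • w s) = piA R p ℓ • w s' → s = s' := by
    intro s s' hs hs' g hg hgw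
    have hπt : piA R p ℓ • (g (w s) - w s') = 0 := by
      rw [smul_sub, ← map_smul, hgw, sub_self]
    have hgws : g (w s) = w s' + (g (w s) - w s') := by abel
    have hc0 : piA R p ℓ * h (w s') (g (w s) - w s') = 0 := by
      rw [← hs2, hπt, hzero2]
    have hσc0 : piA R p ℓ * σ (h (w s') (g (w s) - w s')) = 0 := by
      have h4 := congrArg σ hc0
      rw [map_mul, hσ, map_zero] at h4
      linear_combination -h4
    have hct : piA R p ℓ * h (g (w s) - w s') (g (w s) - w s') = 0 := by
      rw [← hs2, hπt, hzero2]
    have hexp : s = s' + (h (w s') (g (w s) - w s') - σ (h (w s') (g (w s) - w s'))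
        + h (g (w s) - w s') (g (w s) - w s')) := by
      have h5 : h (w s' + (g (w s) - w s')) (w s' + (g (w s) - w s')) = s := by
        rw [← hgws, hg, hval s hs]
      rw [hadd (w s') (g (w s) - w s') (w s' + (g (w s) - w s')),
        hadd2 (w s') (w s') (g (w s) - w s'),
        hadd2 (g (w s) - w s') (w s') (g (w s) - w s'),
        hval s' hs', hsk (w s') (g (w s) - w s')] at h5
      linear_combination -h5
    have hd : σ (s - s') = -(s - s') := by rw [map_sub σ s s', hs, hs']; ring
    have hπd : piA R p ℓ * (s - s') = 0 := by
      have h6 : s - s' = h (w s') (g (w s) - w s') - σ (h (w s') (g (w s) - w s'))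
          + h (g (w s) - w s') (g (w s) - w s') := by linear_combination hexp
      rw [h6]
      linear_combination hc0 - hσc0 + hct
    have h7 := hF6 (s - s') hd hπd
    linear_combination h7
  have hSfin : {a : Aext R p ℓ | σ a = -a}.Finite := Set.toFinite _
  set SF : Finset (Aext R p ℓ) := hSfin.toFinset with hSF
  have hSFmem : ∀ a : Aext R p ℓ, a ∈ SF ↔ σ a = -a := by
    intro a
    rw [hSF, Set.Finite.mem_toFinset]
    rfl
  refine ⟨SF.image w, SF.image (fun s => piA R p ℓ • w s), ?_, ?_, ?_, ?_, ?_⟩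
  · intro u hu
    obtain ⟨s, hsS, rfl⟩ := Finset.mem_image.mp hu
    exact hwnot s
  · intro v hv
    have hsv : σ (h v v) = -(h v v) := hskew v
    refine ⟨w (h v v), ⟨Finset.mem_image_of_mem w ((hSFmem _).mpr hsv),
      (hclass (w (h v v)) v (hwnot _) hv).mpr (hval _ hsv)⟩, ?_⟩
    rintro y ⟨hyT, g, hg, hgy⟩
    obtain ⟨s, hsS, rfl⟩ := Finset.mem_image.mp hyT
    have h6 : h (w s) (w s) = h v v := (hclass (w s) v (hwnot s) hv).mp ⟨g, hg, hgy⟩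
    rw [hval s ((hSFmem s).mp hsS)] at h6
    rw [h6]
  · intro u hu
    obtain ⟨s, hsS, rfl⟩ := Finset.mem_image.mp hu
    constructor
    · exact (hmemr _ _).mpr ⟨w s, rfl⟩
    · intro hc
      rw [Ideal.span_singleton_pow] at hc
      obtain ⟨y, hy⟩ := (hmemr _ _).mp hc
      have h7 : piA R p ℓ • (w s - piA R p ℓ • y) = 0 := by
        rw [smul_sub, smul_smul, ← pow_two, ← hy, sub_self]
      have h8 : ∀ i, piA R p ℓ * b.repr (w s - piA R p ℓ • y) i = 0 := by
        intro i
        have h9 := congrArg (fun x => b.repr x i) h7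
        simpa using h9
      apply hwnot s
      have h9 : w s = (w s - piA R p ℓ • y) + piA R p ℓ • y := by abel
      rw [h9]
      apply Submodule.add_mem
      · have h10 : ∀ i, b.repr (w s - piA R p ℓ • y) i ∈ Ideal.span {piA R p ℓ} := by
          intro i
          refine Ideal.span_singleton_le_span_singleton.mpr
            (dvd_pow_self _ (by omega)) (hL1 _ (h8 i))
        rw [← Module.Basis.sum_repr b (w s - piA R p ℓ • y)]
        exact Submodule.sum_mem _ (fun i _ => Submodule.smul_mem_smul (h10 i) Submodule.mem_top)
      · exact (hmemr _ _).mpr ⟨y, rfl⟩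
  · intro v hv1 hv2
    obtain ⟨u, rfl⟩ := (hmemr _ _).mp hv1
    have hu : u ∉ (Ideal.span {piA R p ℓ} • (⊤ : Submodule (Aext R p ℓ) V) :
        Submodule (Aext R p ℓ) V) := by
      intro hc
      obtain ⟨y, rfl⟩ := (hmemr _ _).mp hc
      apply hv2
      rw [Ideal.span_singleton_pow]
      refine (hmemr _ _).mpr ⟨y, ?_⟩
      rw [smul_smul]
      exact congrArg (· • y) (pow_two (piA R p ℓ)).symm
    have hsu : σ (h u u) = -(h u u) := hskew u
    obtain ⟨g, hg, hgu⟩ := (hclass (w (h u u)) u (hwnot _) hu).mpr (hval _ hsu)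
    refine ⟨piA R p ℓ • w (h u u),
      ⟨Finset.mem_image_of_mem _ ((hSFmem _).mpr hsu), g, hg, by rw [map_smul, hgu]⟩, ?_⟩
    rintro y ⟨hyT, g', hg', hgy⟩
    obtain ⟨t, htS, rfl⟩ := Finset.mem_image.mp hyT
    have hgsymm : ∀ x y : V, h (g.symm x) (g.symm y) = h x y := by
      intro x y
      have h11 := hg (g.symm x) (g.symm y)
      rw [g.apply_symm_apply, g.apply_symm_apply] at h11
      exact h11.symm
    have hG : (g'.trans g.symm) (piA R p ℓ • w t) = piA R p ℓ • w (h u u) := by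
      have hgv : g (piA R p ℓ • w (h u u)) = piA R p ℓ • u := by rw [map_smul, hgu]
      rw [LinearEquiv.trans_apply, hgy, ← hgv, g.symm_apply_apply]
    have h12 := hkey t (h u u) ((hSFmem t).mp htS) hsu (g'.trans g.symm)
      (fun x y => (hgsymm _ _).trans (hg' x y)) hG
    rw [h12]
  · rw [Finset.card_image_of_injective _ hwinj, Finset.card_image_of_injOn]
    intro s hsS s' hsS' hss
    exact hkey s s' ((hSFmem s).mp hsS) ((hSFmem s').mp hsS')
      (LinearEquiv.refl _ _) (fun x y => rfl) (by simpa using hss)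
end
end
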